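/- Semantic soundness of the Par rule: let 𝒫𝒮 : K → event systems be a parallel event system, pre, pst ⊆ S, R, G ⊆ S × S, and for each κ ∈ K let presκ, pstsκ ⊆ S and Rsκ, Gsκ ⊆ S × S. If (1) ⊨ 𝒫𝒮(κ) sat ⟨presκ, Rsκ, Gsκ, pstsκ⟩ for every κ, (2) pre ⊆ presκ for every κ, (3) pstsκ ⊆ pst for every κ, (4) Gsκ ⊆ G for every κ, (5) R ⊆ Rsκ for every κ, and (6) Gsκ ⊆ Rsκ' for all κ ≠ κ', then ⊨ 𝒫𝒮 sat ⟨pre,R,G,pst⟩. -/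
import Mathlib


set_option autoImplicit false

namespace PiCore

/-! ## Syntax of PiCore -/

/-- PiCore programs; `term` is the terminated program `⊥`. -/
inductive Prog (S : Type) : Type where
  | term : Prog S
  | basic : (S → S) → Prog S
  | seq : Prog S → Prog S → Prog S
  | cond : Set S → Prog S → Prog S → Prog S
  | while' : Set S → Prog S → Prog S
  | await : Set S → Prog S → Prog S
  | nondt : Set (S × S) → Prog S

/-! ## Small-step semantics of programs -/

mutual
/-- Small-step program semantics `(P, s) -c→ (P', s')`. -/
inductive PStep {S : Type} : Prog S × S → Prog S × S → Prop where
  | basic (f : S → S) (s : S) : PStep (.basic f, s) (.term, f s)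
  | seq1 {P₁ : Prog S} {s s' : S} (P₂ : Prog S) :
      PStep (P₁, s) (.term, s') → PStep (.seq P₁ P₂, s) (P₂, s')
  | seq2 {P₁ P₁' : Prog S} {s s' : S} (P₂ : Prog S) :
      PStep (P₁, s) (P₁', s') → P₁' ≠ .term → PStep (.seq P₁ P₂, s) (.seq P₁' P₂, s')
  | condT {b : Set S} {s : S} (P₁ P₂ : Prog S) : s ∈ b → PStep (.cond b P₁ P₂, s) (P₁, s)
  | condF {b : Set S} {s : S} (P₁ P₂ : Prog S) : s ∉ b → PStep (.cond b P₁ P₂, s) (P₂, s)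
  | whileT {b : Set S} {s : S} (P : Prog S) : s ∈ b →
      PStep (.while' b P, s) (.seq P (.while' b P), s)
  | whileF {b : Set S} {s : S} (P : Prog S) : s ∉ b → PStep (.while' b P, s) (.term, s)
  | await {b : Set S} {s s' : S} {P : Prog S} : s ∈ b →
      PStepStar (P, s) (.term, s') → PStep (.await b P, s) (.term, s')
  | nondt {r : Set (S × S)} {s s' : S} : (s, s') ∈ r → PStep (.nondt r, s) (.term, s')

/-- Reflexive transitive closure of `PStep`. -/
inductive PStepStar {S : Type} : Prog S × S → Prog S × S → Prop where
  | refl (c : Prog S × S) : PStepStar c c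
  | step {c c' c'' : Prog S × S} : PStep c c' → PStepStar c' c'' → PStepStar c c''
end

/-! ## Events, event systems, parallel event systems -/

/-- A basic event: a label, a guard and a body. -/
structure EvtSpec (L S : Type) : Type where
  label : L
  guard : Set S
  body : Prog S

/-- Events: basic (non-triggered) events and anonymous (triggered) events. -/
inductive Event (L S : Type) : Type where
  | basic : EvtSpec L S → Event L S
  | anony : Prog S → Event L S

/-- Event contexts. -/
abbrev EvtCtx (L S K : Type) := K → Event L S

/-- The action component of a transition label: a program action `c`
or the occurrence of an event. -/
inductive Act (L S : Type) : Type where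
  | cmd : Act L S
  | evt : Event L S → Act L S

/-- Transition labels `t@κ`. -/
abbrev Lbl (L S K : Type) := Act L S × K

/-- Configurations at the level of events. -/
abbrev EConf (L S K : Type) := Event L S × S × EvtCtx L S K

/-- Labelled transitions of events. -/
inductive EStep {L S K : Type} [DecidableEq K] :
    EConf L S K → Lbl L S K → EConf L S K → Prop where
  | anony {P P' : Prog S} {s s' : S} (x : EvtCtx L S K) (κ : K) :
      PStep (P, s) (P', s') → EStep (.anony P, s, x) (.cmd, κ) (.anony P', s', x)
  | basic (α : EvtSpec L S) {s : S} (x : EvtCtx L S K) (κ : K) : s ∈ α.guard →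
      EStep (.basic α, s, x) (.evt (.basic α), κ)
        (.anony α.body, s, Function.update x κ (.basic α))

/-- Event systems: a finite event set `{ℰ₀, …, ℰₙ}` or a sequence `EvtSeq ℰ 𝒮`. -/
inductive EvtSys (L S : Type) : Type where
  | set : (n : ℕ) → (Fin (n + 1) → Event L S) → EvtSys L S
  | seq : Event L S → EvtSys L S → EvtSys L S

/-- Configurations at the level of event systems. -/
abbrev ESConf (L S K : Type) := EvtSys L S × S × EvtCtx L S K

/-- Labelled transitions of event systems. -/
inductive ESStep {L S K : Type} [DecidableEq K] :
    ESConf L S K → Lbl L S K → ESConf L S K → Prop where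
  | set {n : ℕ} {es : Fin (n + 1) → Event L S} (i : Fin (n + 1))
      {s s' : S} {x x' : EvtCtx L S K} {e' : Event L S} {κ : K} :
      EStep (es i, s, x) (.evt (es i), κ) (e', s', x') →
      ESStep (.set n es, s, x) (.evt (es i), κ) (.seq e' (.set n es), s', x')
  | seq1 {e e' : Event L S} (𝒮 : EvtSys L S) {s s' : S} {x x' : EvtCtx L S K}
      {l : Lbl L S K} :
      EStep (e, s, x) l (e', s', x') → e' ≠ .anony .term →
      ESStep (.seq e 𝒮, s, x) l (.seq e' 𝒮, s', x')
  | seq2 {e : Event L S} (𝒮 : EvtSys L S) {s s' : S} {x x' : EvtCtx L S K}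
      {l : Lbl L S K} :
      EStep (e, s, x) l (.anony .term, s', x') →
      ESStep (.seq e 𝒮, s, x) l (𝒮, s', x')

/-- Parallel event systems. -/
abbrev PES (L S K : Type) := K → EvtSys L S

/-- Configurations at the level of parallel event systems. -/
abbrev PConf (L S K : Type) := PES L S K × S × EvtCtx L S K

/-- Labelled transitions of parallel event systems. -/
inductive PESStep {L S K : Type} [DecidableEq K] :
    PConf L S K → Lbl L S K → PConf L S K → Prop where
  | par {ps : PES L S K} {κ : K} {t : Act L S} {s s' : S} {x x' : EvtCtx L S K}
      {es' : EvtSys L S} :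
      ESStep (ps κ, s, x) (t, κ) (es', s', x') →
      PESStep (ps, s, x) (t, κ) (Function.update ps κ es', s', x')

/-! ## Computations -/

section Computation

variable {σ S X : Type}

/-- An environment transition between two configurations:
the specification component is unchanged. -/
def EnvTr (c c' : σ × S × X) : Prop := c.1 = c'.1

/-- Computations: nonempty lists of configurations in which every consecutive pair
is an environment transition or an action transition of the semantics. -/
inductive Comp (step : σ × S × X → σ × S × X → Prop) : List (σ × S × X) → Prop where
  | one (c : σ × S × X) : Comp step [c]
  | env {sp : σ} {s₁ s₂ : S} {x₁ x₂ : X} {cs : List (σ × S × X)} :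
      Comp step ((sp, s₁, x₁) :: cs) → Comp step ((sp, s₂, x₂) :: (sp, s₁, x₁) :: cs)
  | act {c c' : σ × S × X} {cs : List (σ × S × X)} :
      step c c' → Comp step (c' :: cs) → Comp step (c :: c' :: cs)

/-- `Ψ(♯, s, x)`: the computations starting in the configuration `(♯, s, x)`. -/
def cpts (step : σ × S × X → σ × S × X → Prop) (sp : σ) (s : S) (x : X) :
    Set (List (σ × S × X)) :=
  {ϖ | Comp step ϖ ∧ ϖ.head? = some (sp, s, x)}

/-- The assumption `A(pre, R)`. -/
def Assum (pre : Set S) (R : Set (S × S)) : Set (List (σ × S × X)) :=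
  {ϖ | (∀ c, ϖ.head? = some c → c.2.1 ∈ pre) ∧
    ∀ i c c', ϖ[i]? = some c → ϖ[i + 1]? = some c' → EnvTr c c' →
      (c.2.1, c'.2.1) ∈ R}

/-- The commitment `C(G, pst)` (`fin` tells when a specification is terminated). -/
def Commit (step : σ × S × X → σ × S × X → Prop) (fin : σ → Prop)
    (G : Set (S × S)) (pst : Set S) : Set (List (σ × S × X)) :=
  {ϖ | (∀ i c c', ϖ[i]? = some c → ϖ[i + 1]? = some c' → step c c' →
      (c.2.1, c'.2.1) ∈ G) ∧
    ∀ c, ϖ.getLast? = some c → fin c.1 → c.2.1 ∈ pst}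

end Computation

/-! ## Validity of rely-guarantee specifications -/

section Validity

variable {L S K : Type}

/-- Program action transitions lifted to configurations with a trivial event context. -/
def pstepL {S : Type} (c c' : Prog S × S × Unit) : Prop :=
  PStep (c.1, c.2.1) (c'.1, c'.2.1)

/-- Action transitions of events (any label). -/
def estepAny [DecidableEq K] (c c' : EConf L S K) : Prop := ∃ l, EStep c l c'

/-- Action transitions of event systems (any label). -/
def esstepAny [DecidableEq K] (c c' : ESConf L S K) : Prop := ∃ l, ESStep c l c'

/-- Action transitions of parallel event systems (any label). -/
def pesstepAny [DecidableEq K] (c c' : PConf L S K) : Prop := ∃ l, PESStep c l c'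

/-- A terminated program. -/
def progFin : Prog S → Prop := fun P => P = .term

/-- A terminated event. -/
def evtFin : Event L S → Prop := fun e => e = .anony .term

/-- Event systems have no terminated form. -/
def esysFin : EvtSys L S → Prop := fun _ => False

/-- Parallel event systems have no terminated form. -/
def pesFin : PES L S K → Prop := fun _ => False

/-- Validity `⊨ P sat ⟨pre, R, G, pst⟩` for programs. -/
def progValid (P : Prog S) (pre : Set S) (R G : Set (S × S)) (pst : Set S) : Prop :=
  ∀ s : S, cpts pstepL P s () ∩ Assum pre R ⊆ Commit pstepL progFin G pst

/-- Validity `⊨ ℰ sat ⟨pre, R, G, pst⟩` for events. -/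
def evtValid [DecidableEq K] (e : Event L S) (pre : Set S) (R G : Set (S × S))
    (pst : Set S) : Prop :=
  ∀ (s : S) (x : EvtCtx L S K),
    cpts estepAny e s x ∩ Assum pre R ⊆ Commit estepAny evtFin G pst

/-- Validity `⊨ 𝒮 sat ⟨pre, R, G, pst⟩` for event systems. -/
def esysValid [DecidableEq K] (es : EvtSys L S) (pre : Set S) (R G : Set (S × S))
    (pst : Set S) : Prop :=
  ∀ (s : S) (x : EvtCtx L S K),
    cpts esstepAny es s x ∩ Assum pre R ⊆ Commit esstepAny esysFin G pst

/-- Validity `⊨ 𝒫𝒮 sat ⟨pre, R, G, pst⟩` for parallel event systems. -/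
def pesValid [DecidableEq K] (ps : PES L S K) (pre : Set S) (R G : Set (S × S))
    (pst : Set S) : Prop :=
  ∀ (s : S) (x : EvtCtx L S K),
    cpts pesstepAny ps s x ∩ Assum pre R ⊆ Commit pesstepAny pesFin G pst

end Validity

/-! ## The rely-guarantee proof system -/

/-- Specifications: programs, events, event systems, or parallel event systems. -/
inductive Spec (L S K : Type) : Type where
  | prog : Prog S → Spec L S K
  | evt : Event L S → Spec L S K
  | esys : EvtSys L S → Spec L S K
  | pes : PES L S K → Spec L S K

/-- A specification that is not a parallel event system. -/
def Spec.noPar {L S K : Type} : Spec L S K → Prop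
  | .pes _ => False
  | _ => True

/-- Uniform validity `⊨ ♯ sat ⟨pre, R, G, pst⟩`. -/
def RGValid {L S K : Type} [DecidableEq K] :
    Spec L S K → Set S → Set (S × S) → Set (S × S) → Set S → Prop
  | .prog P, pre, R, G, pst => progValid P pre R G pst
  | .evt e, pre, R, G, pst => evtValid (K := K) e pre R G pst
  | .esys es, pre, R, G, pst => esysValid (K := K) es pre R G pst
  | .pes ps, pre, R, G, pst => pesValid ps pre R G pst

/-- `stable f g`. -/
def stable {α : Type} (f : Set α) (g : Set (α × α)) : Prop :=
  ∀ x y, x ∈ f → (x, y) ∈ g → y ∈ f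

/-- The identity relation on a state space. -/
def idRel {S : Type} : Set (S × S) := {p | p.1 = p.2}

/-- The rely-guarantee proof system `⊢ ♯ sat ⟨pre, R, G, pst⟩`. -/
inductive RGDeriv {L S K : Type} [DecidableEq K] :
    Spec L S K → Set S → Set (S × S) → Set (S × S) → Set S → Prop where
  | basic {f : S → S} {pre pst : Set S} {R G : Set (S × S)} :
      pre ⊆ {s | f s ∈ pst} →
      {p : S × S | p.1 ∈ pre ∧ p.2 = f p.1} ⊆ G →
      stable pre R → stable pst R →
      RGDeriv (.prog (.basic f)) pre R G pst
  | seq {P Q : Prog S} {pre m pst : Set S} {R G : Set (S × S)} :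
      RGDeriv (.prog P) pre R G m → RGDeriv (.prog Q) m R G pst →
      RGDeriv (.prog (.seq P Q)) pre R G pst
  | cond {b : Set S} {P₁ P₂ : Prog S} {pre pst : Set S} {R G : Set (S × S)} :
      RGDeriv (.prog P₁) (pre ∩ b) R G pst →
      RGDeriv (.prog P₂) (pre ∩ bᶜ) R G pst →
      stable pre R → idRel ⊆ G →
      RGDeriv (.prog (.cond b P₁ P₂)) pre R G pst
  | whileR {b : Set S} {P : Prog S} {pre pst : Set S} {R G : Set (S × S)} :
      RGDeriv (.prog P) (pre ∩ b) R G pre →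
      pre ∩ bᶜ ⊆ pst →
      stable pre R → stable pst R → idRel ⊆ G →
      RGDeriv (.prog (.while' b P)) pre R G pst
  | awaitR {b : Set S} {P : Prog S} {pre pst : Set S} {R G : Set (S × S)} :
      (∀ V : S, RGDeriv (.prog P) (pre ∩ b ∩ {V}) idRel Set.univ
        ({s | (V, s) ∈ G} ∩ pst)) →
      stable pre R → stable pst R →
      RGDeriv (.prog (.await b P)) pre R G pst
  | nondt {r : Set (S × S)} {pre pst : Set S} {R G : Set (S × S)} :
      pre ⊆ {s | (∀ s', (s, s') ∈ r → s' ∈ pst) ∧ ∃ s', (s, s') ∈ r} →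
      {p : S × S | p.1 ∈ pre ∧ p ∈ r} ⊆ G →
      stable pre R → stable pst R →
      RGDeriv (.prog (.nondt r)) pre R G pst
  | conseq {sp : Spec L S K} {pre pre' pst pst' : Set S} {R R' G G' : Set (S × S)} :
      sp.noPar →
      pre ⊆ pre' → R ⊆ R' → G' ⊆ G → pst' ⊆ pst →
      RGDeriv sp pre' R' G' pst' →
      RGDeriv sp pre R G pst
  | unPre {P : Prog S} {pre pre' pst : Set S} {R G : Set (S × S)} :
      RGDeriv (.prog P) pre R G pst → RGDeriv (.prog P) pre' R G pst →
      RGDeriv (.prog P) (pre ∪ pre') R G pst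
  | intPost {P : Prog S} {pre pst pst' : Set S} {R G : Set (S × S)} :
      RGDeriv (.prog P) pre R G pst → RGDeriv (.prog P) pre R G pst' →
      RGDeriv (.prog P) pre R G (pst ∩ pst')
  | univPre {P : Prog S} {pre pst : Set S} {R G : Set (S × S)} :
      (∀ v ∈ pre, RGDeriv (.prog P) {v} R G pst) →
      RGDeriv (.prog P) pre R G pst
  | emptyPre {P : Prog S} {pst : Set S} {R G : Set (S × S)} :
      RGDeriv (.prog P) ∅ R G pst
  | inner {P : Prog S} {pre pst : Set S} {R G : Set (S × S)} :
      RGDeriv (.prog P) pre R G pst →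
      RGDeriv (.evt (.anony P)) pre R G pst
  | basicEvt {α : EvtSpec L S} {pre pst : Set S} {R G : Set (S × S)} :
      RGDeriv (.prog α.body) (pre ∩ α.guard) R G pst →
      stable pre R → idRel ⊆ G →
      RGDeriv (.evt (.basic α)) pre R G pst
  | evtSeq {e : Event L S} {𝒮 : EvtSys L S} {pre m pst : Set S} {R G : Set (S × S)} :
      RGDeriv (.evt e) pre R G m → RGDeriv (.esys 𝒮) m R G pst →
      RGDeriv (.esys (.seq e 𝒮)) pre R G pst
  | evtSet {n : ℕ} {es : Fin (n + 1) → Event L S} {pre pst : Set S}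
      {R G : Set (S × S)} {pres psts : Fin (n + 1) → Set S}
      {Rs Gs : Fin (n + 1) → Set (S × S)} :
      (∀ i, RGDeriv (.evt (es i)) (pres i) (Rs i) (Gs i) (psts i)) →
      (∀ i j, psts i ⊆ pres j) →
      (∀ i, pre ⊆ pres i) → (∀ i, psts i ⊆ pst) →
      (∀ i, R ⊆ Rs i) → (∀ i, Gs i ⊆ G) →
      stable pre R → idRel ⊆ G →
      RGDeriv (.esys (.set n es)) pre R G pst
  | par {ps : PES L S K} {pre pst : Set S} {R G : Set (S × S)}
      {pres psts : K → Set S} {Rs Gs : K → Set (S × S)} :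
      (∀ κ, RGDeriv (.esys (ps κ)) (pres κ) (Rs κ) (Gs κ) (psts κ)) →
      (∀ κ, pre ⊆ pres κ) → (∀ κ, psts κ ⊆ pst) →
      (∀ κ, Gs κ ⊆ G) → (∀ κ, R ⊆ Rs κ) →
      (∀ κ κ', κ ≠ κ' → Gs κ ⊆ Rs κ') →
      RGDeriv (.pes ps) pre R G pst


/-! ## Serialization and compositionality machinery -/

/-- The set of events occurring syntactically in an event system. -/
def EvtSys.evts {L S : Type} : EvtSys L S → Set (Event L S)
  | .set _ es => Set.range es
  | .seq e 𝒮 => insert e 𝒮.evts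

/-- Similarity (simulation) of two computations, possibly over different
specification types: same length, and at each position the states and event
contexts coincide and the steps are the same labelled action transitions
(resp. environment transitions). -/
def Similar {σ₁ σ₂ S X Λ : Type}
    (st₁ : σ₁ × S × X → Λ → σ₁ × S × X → Prop)
    (st₂ : σ₂ × S × X → Λ → σ₂ × S × X → Prop)
    (w₁ : List (σ₁ × S × X)) (w₂ : List (σ₂ × S × X)) : Prop :=
  w₁.length = w₂.length ∧
  ∀ i c₁ c₁' c₂ c₂', w₁[i]? = some c₁ → w₁[i + 1]? = some c₁' →
    w₂[i]? = some c₂ → w₂[i + 1]? = some c₂' →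
    c₁.2.1 = c₂.2.1 ∧ c₁.2.2 = c₂.2.2 ∧
    (∀ δ, st₁ c₁ δ c₁' ↔ st₂ c₂ δ c₂') ∧
    (EnvTr c₁ c₁' ↔ EnvTr c₂ c₂')

/-- The computations of an event (from an arbitrary initial state and
event context). -/
def cptsOfEvt {L S K : Type} [DecidableEq K] (e : Event L S) :
    Set (List (EConf L S K)) :=
  {w | Comp estepAny w ∧ ∃ s x, w.head? = some (e, s, x)}

/-- A computation `w` of a parallel event system and a family `cf` of
computations of event systems conjoin, `w ∝ cf` (Definition 2). -/
def Conjoin {L S K : Type} [DecidableEq K] (w : List (PConf L S K))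
    (cf : K → List (ESConf L S K)) : Prop :=
  (∀ κ, (cf κ).length = w.length) ∧
  (∀ (κ : K) (j : ℕ) c c', w[j]? = some c → (cf κ)[j]? = some c' →
    c.2.1 = c'.2.1 ∧ c.2.2 = c'.2.2 ∧ c.1 κ = c'.1) ∧
  (∀ (j : ℕ) c c', w[j]? = some c → w[j + 1]? = some c' →
    (EnvTr c c' ∧
      ∀ κ d d', (cf κ)[j]? = some d → (cf κ)[j + 1]? = some d' → EnvTr d d') ∨
    (∃ (t : Act L S) (κ₁ : K), PESStep c (t, κ₁) c' ∧
      (∀ d d', (cf κ₁)[j]? = some d → (cf κ₁)[j + 1]? = some d' →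
        ESStep d (t, κ₁) d') ∧
      (∀ κ, κ ≠ κ₁ → ∀ d d', (cf κ)[j]? = some d → (cf κ)[j + 1]? = some d' →
        EnvTr d d')))



/-! ## Auxiliary lemmas for the soundness proof -/

section Aux

/-- A size measure on programs. -/
def psize {S : Type} : Prog S → ℕ
  | .term => 0
  | .basic _ => 0
  | .nondt _ => 0
  | .seq p q => psize p + psize q + 1
  | .cond _ p q => psize p + psize q + 1
  | .while' _ p => psize p + 1
  | .await _ p => psize p + 1

/-- A program step never leaves the program unchanged. -/
theorem pstep_ne {S : Type} :
    ∀ (P : Prog S) {s : S} {P' : Prog S} {s' : S}, PStep (P, s) (P', s') → P' ≠ P := by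
  intro P
  induction P with
  | term => intro s P' s' h; cases h
  | basic f => intro s P' s' h; cases h; simp
  | seq P₁ P₂ ih₁ ih₂ =>
    intro s P' s' h
    cases h with
    | seq1 _ h' =>
      intro he
      have := congrArg psize he
      simp [psize] at this
      omega
    | seq2 _ h' hne =>
      intro he
      injection he with h1 h2
      exact ih₁ h' h1
  | cond b P₁ P₂ ih₁ ih₂ =>
    intro s P' s' h
    cases h with
    | condT _ _ hb =>
      intro he
      have := congrArg psize he
      simp [psize] at this
      omega
    | condF _ _ hb =>
      intro he
      have := congrArg psize he
      simp [psize] at this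
      omega
  | while' b P ih =>
    intro s P' s' h
    cases h with
    | whileT _ hb => simp
    | whileF _ hb => simp
  | await b P ih => intro s P' s' h; cases h; simp
  | nondt r => intro s P' s' h; cases h; simp

/-- An event step never leaves the event unchanged. -/
theorem estep_ne {L S K : Type} [DecidableEq K]
    {e : Event L S} {s : S} {x : EvtCtx L S K} {l : Lbl L S K}
    {e' : Event L S} {s' : S} {x' : EvtCtx L S K}
    (h : EStep (e, s, x) l (e', s', x')) : e' ≠ e := by
  cases h with
  | anony x κ hp =>
    intro he
    injection he with h1
    exact pstep_ne _ hp h1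
  | basic α x κ hg => simp

/-- A size measure on event systems. -/
def essize {L S : Type} : EvtSys L S → ℕ
  | .set _ _ => 0
  | .seq _ 𝒮 => essize 𝒮 + 1

/-- An event-system step never leaves the event system unchanged. -/
theorem esstep_ne {L S K : Type} [DecidableEq K]
    {es : EvtSys L S} {s : S} {x : EvtCtx L S K} {l : Lbl L S K}
    {es' : EvtSys L S} {s' : S} {x' : EvtCtx L S K}
    (h : ESStep (es, s, x) l (es', s', x')) : es' ≠ es := by
  cases h with
  | set i he => simp
  | seq1 𝒮 he hne =>
    intro heq
    injection heq with h1 h2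
    exact estep_ne he h1
  | seq2 𝒮 he =>
    intro heq
    have := congrArg essize heq
    simp [essize] at this

/-- Nonempty prefixes of computations are computations. -/
theorem comp_take {σ S X : Type} {step : σ × S × X → σ × S × X → Prop} :
    ∀ {w : List (σ × S × X)}, Comp step w → ∀ n, Comp step (w.take (n + 1)) := by
  intro w h
  induction h with
  | one c => intro n; simpa using Comp.one c
  | env h ih =>
    intro n
    cases n with
    | zero => exact Comp.one _
    | succ m =>
      simp only [List.take_succ_cons]
      exact Comp.env (by simpa using ih m)
  | act hs h ih =>
    intro n
    cases n with
    | zero => exact Comp.one _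
    | succ m =>
      simp only [List.take_succ_cons]
      exact Comp.act hs (by simpa using ih m)

/-- Every consecutive pair in a computation is an environment or an action
transition. -/
theorem comp_pair {σ S X : Type} {step : σ × S × X → σ × S × X → Prop} :
    ∀ {w : List (σ × S × X)}, Comp step w → ∀ (i : ℕ) c c',
      w[i]? = some c → w[i + 1]? = some c' → EnvTr c c' ∨ step c c' := by
  intro w h
  induction h with
  | one c => intro i a b ha hb; simp at hb
  | env h ih =>
    intro i a b ha hb
    cases i with
    | zero =>
      simp only [List.getElem?_cons_zero, List.getElem?_cons_succ, Option.some_inj] at ha hb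
      subst ha; subst hb
      left; rfl
    | succ m =>
      rw [List.getElem?_cons_succ] at ha hb
      exact ih m _ _ ha hb
  | act hs h ih =>
    intro i a b ha hb
    cases i with
    | zero =>
      simp only [List.getElem?_cons_zero, List.getElem?_cons_succ, Option.some_inj] at ha hb
      subst ha; subst hb
      right; exact hs
    | succ m =>
      rw [List.getElem?_cons_succ] at ha hb
      exact ih m _ _ ha hb

/-- Projection of a parallel-event-system configuration onto one component. -/
def projC {L S K : Type} (κ : K) (c : PConf L S K) : ESConf L S K := (c.1 κ, c.2)

/-- The projection of a computation of a parallel event system onto a single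
component is a computation of the corresponding event system. -/
theorem comp_proj {L S K : Type} [DecidableEq K] (κ : K) :
    ∀ {w : List (PConf L S K)}, Comp pesstepAny w →
      Comp esstepAny (w.map (projC κ)) := by
  intro w h
  induction h with
  | one c => exact Comp.one _
  | env h ih => exact Comp.env ih
  | act hs h ih =>
    rename_i c c' cs
    obtain ⟨⟨t, κ₁⟩, hst⟩ := hs
    cases hst with
    | par hes =>
      rename_i ps s s' x x' es'
      by_cases hk : κ₁ = κ
      · subst hk
        refine Comp.act ⟨(t, κ₁), ?_⟩ ih
        show ESStep (ps κ₁, s, x) (t, κ₁) (Function.update ps κ₁ es' κ₁, s', x')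
        simpa using hes
      · have hupd : Function.update ps κ₁ es' κ = ps κ :=
          Function.update_of_ne (fun hh => hk hh.symm) _ _
        show Comp esstepAny
          ((ps κ, s, x) :: (Function.update ps κ₁ es' κ, s', x') :: _)
        rw [hupd]
        have ih' : Comp esstepAny ((ps κ, s', x') :: List.map (projC κ) cs) := by
          simpa [projC, hupd] using ih
        exact Comp.env ih'

end Aux

/-- **Semantic soundness of the Par rule.** -/
theorem par_rule_sound {L S K : Type} [DecidableEq K]
    (ps : PES L S K) (pre pst : Set S) (R G : Set (S × S))
    (pres psts : K → Set S) (Rs Gs : K → Set (S × S))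
    (h1 : ∀ κ, esysValid (K := K) (ps κ) (pres κ) (Rs κ) (Gs κ) (psts κ))
    (h2 : ∀ κ, pre ⊆ pres κ) (h3 : ∀ κ, psts κ ⊆ pst)
    (h4 : ∀ κ, Gs κ ⊆ G) (h5 : ∀ κ, R ⊆ Rs κ)
    (h6 : ∀ κ κ', κ ≠ κ' → Gs κ ⊆ Rs κ') :
    pesValid ps pre R G pst := by
  intro s x ϖ hmem
  obtain ⟨⟨hcomp, hhead⟩, hpre, henv⟩ := hmem
  -- the head of ϖ is (ps, s, x)
  obtain ⟨rest, rfl⟩ : ∃ rest, ϖ = (ps, s, x) :: rest := by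
    cases ϖ with
    | nil => simp at hhead
    | cons c0 rest =>
      simp only [List.head?_cons, Option.some_inj] at hhead
      exact ⟨rest, by rw [hhead]⟩
  set w : List (PConf L S K) := (ps, s, x) :: rest with hw
  have hs_pre : s ∈ pre := by
    have := hpre (ps, s, x) (by simp [hw])
    exact this
  -- index transfer between w and the projected prefix
  have hu_of_w : ∀ (κ : K) (j i : ℕ), i < j + 2 → ∀ c, w[i]? = some c →
      ((w.take (j + 2)).map (projC κ))[i]? = some (projC κ c) := by
    intro κ j i hi c hc
    rw [List.getElem?_map, List.getElem?_take, if_pos hi, hc]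
    rfl
  have hw_of_u : ∀ (κ : K) (j i : ℕ) d,
      ((w.take (j + 2)).map (projC κ))[i]? = some d →
      ∃ c, w[i]? = some c ∧ d = projC κ c ∧ i < j + 2 := by
    intro κ j i d hd
    rw [List.getElem?_map] at hd
    have hi : i < j + 2 := by
      by_contra hge
      rw [List.getElem?_take, if_neg hge] at hd
      simp at hd
    rw [List.getElem?_take, if_pos hi] at hd
    cases hc : w[i]? with
    | none => rw [hc] at hd; simp at hd
    | some c =>
      rw [hc] at hd
      simp only [Option.map_some, Option.some_inj] at hd
      exact ⟨c, rfl, hd.symm, hi⟩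
  -- main claim, by strong induction on the position
  have claim : ∀ j : ℕ, ∀ (c c' : PConf L S K) (t : Act L S) (κ : K),
      w[j]? = some c → w[j + 1]? = some c' → PESStep c (t, κ) c' →
      (c.2.1, c'.2.1) ∈ Gs κ := by
    intro j
    induction j using Nat.strong_induction_on with
    | _ j ih =>
      intro c c' t κ hj hj1 hstep
      set u : List (ESConf L S K) := (w.take (j + 2)).map (projC κ) with hu
      have hcompU : Comp esstepAny u := by
        have : j + 2 = (j + 1) + 1 := rfl
        rw [hu, this]
        exact comp_proj κ (comp_take hcomp (j + 1))
      have hheadU : u.head? = some (ps κ, s, x) := by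
        simp [hu, hw, List.take_succ_cons, projC]
      have hUassum : u ∈ Assum (pres κ) (Rs κ) := by
        constructor
        · intro d hd
          rw [hheadU, Option.some_inj] at hd
          rw [← hd]
          exact h2 κ hs_pre
        · intro i d d' hd hd' henvP
          obtain ⟨ci, hci, rfl, hilt⟩ := hw_of_u κ j i d hd
          obtain ⟨ci', hci', rfl, _⟩ := hw_of_u κ j (i + 1) d' hd'
          have henvκ : ci.1 κ = ci'.1 κ := henvP
          by_cases hij : i = j
          · -- impossible: the given step is at κ
            subst hij
            rw [hj, Option.some_inj] at hci
            rw [hj1, Option.some_inj] at hci'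
            subst hci; subst hci'
            exfalso
            cases hstep with
            | par hes =>
              rename_i ps' s₀ s₀' x₀ x₀' es'
              have : Function.update ps' κ es' κ = ps' κ := henvκ.symm
              rw [Function.update_self] at this
              exact esstep_ne hes this
          · have hij' : i < j := by
              have : i + 1 < j + 2 := by
                by_contra hge
                have : ¬ ((w.take (j + 2)).map (projC κ))[i + 1]? = some (projC κ ci') := by
                  rw [List.getElem?_map, List.getElem?_take, if_neg hge]
                  simp
                exact this hd'
              omega
            rcases comp_pair hcomp i ci ci' hci hci' with henvW | hact
            · exact h5 κ (henv i ci ci' hci hci' henvW)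
            · obtain ⟨⟨t', κ₁⟩, hst⟩ := hact
              cases hst with
              | par hes =>
                rename_i psᵢ s₀ s₀' x₀ x₀' es''
                by_cases hκ : κ₁ = κ
                · exfalso
                  subst hκ
                  have : Function.update psᵢ κ₁ es'' κ₁ = psᵢ κ₁ := henvκ.symm
                  rw [Function.update_self] at this
                  exact esstep_ne hes this
                · exact h6 κ₁ κ hκ
                    (ih i hij' (psᵢ, s₀, x₀) _ t' κ₁ hci hci'
                      (PESStep.par hes))
      have hUcommit := h1 κ s x ⟨⟨hcompU, hheadU⟩, hUassum⟩
      obtain ⟨hGU, _⟩ := hUcommit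
      have hstepU : esstepAny (projC κ c) (projC κ c') := by
        refine ⟨(t, κ), ?_⟩
        cases hstep with
        | par hes =>
          rename_i ps' s₀ s₀' x₀ x₀' es'
          show ESStep (ps' κ, s₀, x₀) (t, κ) (Function.update ps' κ es' κ, s₀', x₀')
          simpa using hes
      exact hGU j (projC κ c) (projC κ c')
        (hu_of_w κ j j (by omega) c hj)
        (hu_of_w κ j (j + 1) (by omega) c' hj1)
        hstepU
  constructor
  · intro i c c' hi hi' hstep
    obtain ⟨⟨t, κ⟩, hst⟩ := hstep
    exact h4 κ (claim i c c' t κ hi hi' hst)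
  · intro c _ hfin
    exact hfin.elim

end PiCore
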